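/- The or-mask m_s^∨ is optimal for the disjunction context under any mask m satisfying m ≥ m_s^∨ on the relevant points: if m' is a mask with m'(t₀) = false while s(t₀) ∈ {F, U} and m(t₀) = true, then there exists a signal w and time t with m(t) = true such that (s ∨ (w|_{m'}))(t) ≠ (s ∨ w)(t). -/

import Mathlib

inductive TV : Type | T | F | U
deriving DecidableEq

open TV Set Pointwise

def maskApply (s : ℝ → TV) (m : ℝ → Bool) : ℝ → TV :=
  fun t => if m t then s t else TV.U

def tvNot : TV → TV
  | TV.T => TV.F | TV.F => TV.T | TV.U => TV.U

def tvOr : TV → TV → TV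
  | TV.T, _ => TV.T
  | _, TV.T => TV.T
  | TV.F, TV.F => TV.F
  | _, _ => TV.U

def tvAnd : TV → TV → TV
  | TV.F, _ => TV.F
  | _, TV.F => TV.F
  | TV.T, TV.T => TV.T
  | _, _ => TV.U

open Classical in
noncomputable def evOp (a b : ℝ) (s : ℝ → TV) : ℝ → TV :=
  fun t =>
    if ∃ t' ∈ Set.Icc (t + a) (t + b), s t' = TV.T then TV.T
    else if ∀ t' ∈ Set.Icc (t + a) (t + b), s t' = TV.F then TV.F
    else TV.U

open Classical in
noncomputable def glOp (a b : ℝ) (s : ℝ → TV) : ℝ → TV :=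
  fun t =>
    if ∃ t' ∈ Set.Icc (t + a) (t + b), s t' = TV.F then TV.F
    else if ∀ t' ∈ Set.Icc (t + a) (t + b), s t' = TV.T then TV.T
    else TV.U

open Classical in
noncomputable def pastMask (a b : ℝ) (m : ℝ → Bool) : ℝ → Bool :=
  fun t => decide (∃ t'' ∈ Set.Icc (t - b) (t - a) ∩ Set.Ici (0:ℝ), m t'' = true)

def orMask (s : ℝ → TV) : ℝ → Bool := fun t => !(s t == TV.T)

def andMask (s : ℝ → TV) : ℝ → Bool := fun t => !(s t == TV.F)

def Hset (a b : ℝ) (S : Set ℝ) : Set ℝ := {t | Set.Icc (t - b) (t - a) ⊆ S}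

def Pset (a b : ℝ) (S : Set ℝ) : Set ℝ := {t | ∃ t' ∈ Set.Icc (t - b) (t - a), t' ∈ S}
theorem tvOr_T_right (a : TV) : tvOr a T = T := by
  cases a <;> rfl

theorem tvOr_U_ne_T {a : TV} (ha : a ≠ T) : tvOr a U ≠ T := by
  cases a <;> simp_all [tvOr]

theorem maskApply_of_false (w : ℝ → TV) {m : ℝ → Bool} {t : ℝ} (h : m t = false) :
    maskApply w m t = U := by
  simp [maskApply, h]

theorem orMask_optimal (s : ℝ → TV) (m m' : ℝ → Bool) (t₀ : ℝ)
    (h₀ : m' t₀ = false) (hs : s t₀ ≠ TV.T) (hm : m t₀ = true) :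
    ∃ (w : ℝ → TV) (t : ℝ), m t = true ∧
      tvOr (s t) (maskApply w m' t) ≠ tvOr (s t) (w t) := by
  refine ⟨fun _ => T, t₀, hm, ?_⟩
  rw [maskApply_of_false _ h₀, tvOr_T_right]
  exact tvOr_U_ne_T hs
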